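/- Let (x_m)_{m≥0} be the k-averaging process on ℝ^n with n > k ≥ 2, started from a deterministic vector x_0 with ∑_{i=1}^n x_{0,i} = 0, let S_n(l) = ∑_{i=1}^n x_{l,i}², and let F_l be the σ-algebra generated by the process up to time l. Then for every l ≥ 0, almost surely E[S_n(l+1) | F_l] = (1 − (k−1)/(n−1)) · S_n(l). -/

import Mathlib

open MeasureTheory ProbabilityTheory Filter

noncomputable section

instance (α : Type*) : MeasurableSpace (Finset α) := ⊤

/-- One averaging step: replace all coordinates in `A` by their average. -/
def avgStep {n : ℕ} (k : ℕ) (A : Finset (Fin n)) (x : Fin n → ℝ) : Fin n → ℝ :=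
  fun i => if i ∈ A then (∑ j ∈ A, x j) / k else x i

/-- The `k`-averaging process driven by the sequence of chosen subsets `A · ω`. -/
def proc {Ω : Type*} {n : ℕ} (k : ℕ) (x0 : Fin n → ℝ) (A : ℕ → Ω → Finset (Fin n))
    (ω : Ω) : ℕ → Fin n → ℝ
  | 0 => x0
  | m + 1 => avgStep k (A m ω) (proc k x0 A ω m)

/-- The natural σ-algebra generated by the `k`-averaging process up to time `l`. -/
def procFiltration {Ω : Type*} {n : ℕ} (k : ℕ) (x0 : Fin n → ℝ)
    (A : ℕ → Ω → Finset (Fin n)) (l : ℕ) : MeasurableSpace Ω :=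
  ⨆ m ∈ Set.Iic l, MeasurableSpace.comap (fun ω => proc k x0 A ω m) inferInstance

/-!
The state `x = x_l` is `F_l`-measurable, while the next subset `A_l` is independent of `F_l` and
uniform on `k`-subsets, so `E[S(l+1) | F_l]` is the average over all `k`-subsets `a` of
`∑ᵢ (avgStep a x)ᵢ² = S(l) - ∑_{i∈a} xᵢ² + (∑_{i∈a} xᵢ)² / k`. Counting the `k`-subsets that
contain one, resp. two, given indices evaluates this average in terms of `S(l)` and `(∑ᵢ xᵢ)²`,
and the latter vanishes because averaging steps preserve the sum of the coordinates.
-/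

open Finset

section Combinatorics

variable {α : Type*} [Fintype α] [DecidableEq α] {k : ℕ}

lemma card_filter_mem_powersetCard_univ (hk : 1 ≤ k) (i : α) :
    #{a ∈ powersetCard k univ | i ∈ a} = (Fintype.card α - 1).choose (k - 1) := by
  simpa using card_filter_powersetCard_subset {i} univ k (subset_univ _) (by simpa using hk)

lemma card_filter_pair_mem_powersetCard_univ (hk : 2 ≤ k) {i j : α} (hij : i ≠ j) :
    #{a ∈ powersetCard k univ | i ∈ a ∧ j ∈ a} = (Fintype.card α - 2).choose (k - 2) := by
  have hcard : #{i, j} = 2 := card_pair hij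
  simpa [hcard, insert_subset_iff] using
    card_filter_powersetCard_subset {i, j} univ k (subset_univ _) (hcard ▸ hk)

lemma sum_powersetCard_univ_sum (hk : 1 ≤ k) (g : α → ℝ) :
    ∑ a ∈ powersetCard k univ, ∑ i ∈ a, g i
      = (Fintype.card α - 1).choose (k - 1) * ∑ i, g i := by
  rw [sum_comm' (t' := univ) (s' := fun i => {a ∈ powersetCard k univ | i ∈ a})
    (by simp), mul_sum]
  simp [card_filter_mem_powersetCard_univ hk]

lemma sum_powersetCard_univ_sq_sum (hk : 2 ≤ k) (x : α → ℝ) :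
    ∑ a ∈ powersetCard k univ, (∑ i ∈ a, x i) ^ 2
      = ((Fintype.card α - 1).choose (k - 1) - (Fintype.card α - 2).choose (k - 2) : ℝ)
          * ∑ i, x i ^ 2 + (Fintype.card α - 2).choose (k - 2) * (∑ i, x i) ^ 2 := by
  set c₁ : ℝ := ↑((Fintype.card α - 1).choose (k - 1))
  set c₂ : ℝ := ↑((Fintype.card α - 2).choose (k - 2))
  have hpairs : ∀ i j : α, (#{a ∈ powersetCard k univ | i ∈ a ∧ j ∈ a} : ℝ)
      = c₂ + if i = j then c₁ - c₂ else 0 := by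
    intro i j
    rcases eq_or_ne i j with rfl | hij
    · simp [c₁, card_filter_mem_powersetCard_univ (by omega : 1 ≤ k)]
    · simp [c₂, hij, card_filter_pair_mem_powersetCard_univ hk hij]
  calc ∑ a ∈ powersetCard k univ, (∑ i ∈ a, x i) ^ 2
      = ∑ a ∈ powersetCard k univ, ∑ i, ∑ j, if i ∈ a ∧ j ∈ a then x i * x j else 0 := by
        refine sum_congr rfl fun a _ => ?_
        rw [sq, sum_mul_sum, ← sum_subset (subset_univ a) (by simp_all)]
        refine sum_congr rfl fun i hi => ?_
        rw [← sum_subset (subset_univ a) (by simp_all)]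
        exact sum_congr rfl fun j hj => by simp [hi, hj]
    _ = ∑ i, ∑ j, (#{a ∈ powersetCard k univ | i ∈ a ∧ j ∈ a} : ℝ) * (x i * x j) := by
        rw [sum_comm]
        refine sum_congr rfl fun i _ => ?_
        rw [sum_comm]
        simp [sum_ite]
    _ = _ := by
        simp only [hpairs, add_mul, sum_add_distrib, ite_mul, zero_mul, sum_ite_eq, mem_univ,
          if_true, ← mul_sum, sq, sum_mul_sum]
        ring

end Combinatorics

section AveragingStep

variable {n k : ℕ}

lemma sum_avgStep {a : Finset (Fin n)} (ha : #a = k) (hk : k ≠ 0) (x : Fin n → ℝ) :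
    ∑ i, avgStep k a x i = ∑ i, x i := by
  rw [← sum_add_sum_compl a, ← sum_add_sum_compl a x]
  congr 1
  · have hin : ∀ i ∈ a, avgStep k a x i = (∑ j ∈ a, x j) / k := fun i hi => if_pos hi
    rw [sum_congr rfl hin, sum_const, ha, nsmul_eq_mul,
      mul_div_cancel₀ _ (Nat.cast_ne_zero.mpr hk)]
  · exact sum_congr rfl fun i hi => by simp [avgStep, mem_compl.mp hi]

lemma sum_sq_avgStep {a : Finset (Fin n)} (ha : #a = k) (x : Fin n → ℝ) :
    ∑ i, avgStep k a x i ^ 2 = ∑ i, x i ^ 2 - ∑ i ∈ a, x i ^ 2 + (∑ i ∈ a, x i) ^ 2 / k := by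
  rw [← sum_add_sum_compl a, ← sum_add_sum_compl a (fun i => x i ^ 2)]
  have hin : ∑ i ∈ a, avgStep k a x i ^ 2 = (∑ i ∈ a, x i) ^ 2 / k := by
    have hval : ∀ i ∈ a, avgStep k a x i ^ 2 = ((∑ j ∈ a, x j) / k) ^ 2 := fun i hi => by
      rw [avgStep, if_pos hi]
    rw [sum_congr rfl hval, sum_const, ha, nsmul_eq_mul]
    rcases eq_or_ne k 0 with rfl | hk
    · simp
    · field_simp
  have hout : ∑ i ∈ aᶜ, avgStep k a x i ^ 2 = ∑ i ∈ aᶜ, x i ^ 2 :=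
    sum_congr rfl fun i hi => by simp [avgStep, mem_compl.mp hi]
  rw [hin, hout]
  ring

lemma sum_powersetCard_sum_sq_avgStep (hk : 2 ≤ k) (hkn : k ≤ n) {x : Fin n → ℝ}
    (hx : ∑ i, x i = 0) :
    ∑ a ∈ powersetCard k univ, ∑ i, avgStep k a x i ^ 2
      = n.choose k * ((1 - ((k : ℝ) - 1) / ((n : ℝ) - 1)) * ∑ i, x i ^ 2) := by
  have hsum : ∑ a ∈ powersetCard k univ, ∑ i, avgStep k a x i ^ 2
      = ∑ a ∈ powersetCard k univ,
          (∑ i, x i ^ 2 - ∑ i ∈ a, x i ^ 2 + (∑ i ∈ a, x i) ^ 2 / k) :=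
    sum_congr rfl fun a ha => sum_sq_avgStep (mem_powersetCard_univ.mp ha) x
  rw [hsum, sum_add_distrib, sum_sub_distrib, ← sum_div, sum_const, card_powersetCard,
    sum_powersetCard_univ_sum (by omega), sum_powersetCard_univ_sq_sum hk, hx]
  obtain ⟨n, rfl⟩ : ∃ m, n = m + 2 := ⟨n - 2, by omega⟩
  obtain ⟨k, rfl⟩ : ∃ j, k = j + 2 := ⟨k - 2, by omega⟩
  have h₁ : ((n + 2 : ℕ) : ℝ) * (n + 1).choose (k + 1) = (n + 2).choose (k + 2) * (k + 2 : ℕ) :=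
    mod_cast Nat.add_one_mul_choose_eq (n + 1) (k + 1)
  have h₂ : ((n + 1 : ℕ) : ℝ) * n.choose k = (n + 1).choose (k + 1) * (k + 1 : ℕ) :=
    mod_cast Nat.add_one_mul_choose_eq n k
  simp only [card_univ, Fintype.card_fin, nsmul_eq_mul, Nat.add_sub_cancel,
    zero_pow two_ne_zero, mul_zero, add_zero]
  push_cast at h₁ h₂ ⊢
  have hn : (n : ℝ) + 2 - 1 ≠ 0 := by linarith [n.cast_nonneg (α := ℝ)]
  field_simp
  linear_combination (-(∑ i, x i ^ 2) * (k + 1)) * h₁ - (∑ i, x i ^ 2) * h₂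

end AveragingStep

lemma MeasureTheory.Integrable.of_finite_range {Ω E : Type*} [MeasurableSpace Ω]
    [NormedAddCommGroup E] {μ : Measure Ω} [IsFiniteMeasure μ] {f : Ω → E}
    (hf : AEStronglyMeasurable f μ) (hfin : (Set.range f).Finite) : Integrable f μ := by
  obtain ⟨C, hC⟩ := (hfin.image (‖·‖)).bddAbove
  exact .of_bound hf C (ae_of_all _ fun ω => hC ⟨f ω, ⟨ω, rfl⟩, rfl⟩)

instance (α : Type*) : DiscreteMeasurableSpace (Finset α) := ⟨fun _ => trivial⟩

section Trajectory

variable {Ω : Type*} {n k : ℕ} {x0 : Fin n → ℝ} {A : ℕ → Ω → Finset (Fin n)}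

lemma sum_proc_eq_sum (hk : k ≠ 0) {ω : Ω} :
    ∀ {m : ℕ}, (∀ i < m, #(A i ω) = k) → ∑ j, proc k x0 A ω m j = ∑ j, x0 j
  | 0, _ => rfl
  | m + 1, hcard => by
    rw [proc, sum_avgStep (hcard m m.lt_add_one) hk,
      sum_proc_eq_sum hk fun i hi => hcard i (hi.trans m.lt_add_one)]

lemma finite_range_proc (m : ℕ) : (Set.range fun ω => proc k x0 A ω m).Finite := by
  induction m with
  | zero => exact (Set.finite_singleton x0).subset Set.range_const_subset
  | succ m ih =>
    refine ((Set.finite_univ.prod ih).image fun p => avgStep k p.1 p.2).subset ?_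
    rintro _ ⟨ω, rfl⟩
    exact ⟨(A m ω, proc k x0 A ω m), ⟨trivial, ω, rfl⟩, rfl⟩

@[fun_prop]
lemma measurable_avgStep (a : Finset (Fin n)) : Measurable (avgStep k a) :=
  measurable_pi_lambda _ fun i => by unfold avgStep; split_ifs <;> fun_prop

lemma measurable_proc {mΩ : MeasurableSpace Ω} :
    ∀ {m : ℕ}, (∀ i < m, Measurable (A i)) → Measurable fun ω => proc k x0 A ω m
  | 0, _ => measurable_const
  | m + 1, hA => (measurable_from_prod_countable_right
      (f := fun p : Finset (Fin n) × (Fin n → ℝ) => avgStep k p.1 p.2) measurable_avgStep).comp <|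
    (hA m m.lt_add_one).prodMk (measurable_proc fun i hi => hA i (hi.trans m.lt_add_one))

lemma procFiltration_le_iSup_comap (l : ℕ) :
    procFiltration k x0 A l ≤ ⨆ i ∈ Set.Iio l, MeasurableSpace.comap (A i) inferInstance := by
  refine iSup₂_le fun m hm => (measurable_proc fun i hi => ?_).comap_le
  exact (comap_measurable (A i)).mono (le_iSup₂ (f := fun i (_ : i ∈ Set.Iio l) =>
    MeasurableSpace.comap (A i) inferInstance) i (lt_of_lt_of_le hi hm)) le_rfl

lemma measurable_proc_procFiltration (l : ℕ) :
    Measurable[procFiltration k x0 A l] fun ω => proc k x0 A ω l :=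
  measurable_iff_comap_le.mpr (le_iSup₂ (f := fun m (_ : m ∈ Set.Iic l) =>
    MeasurableSpace.comap (fun ω => proc k x0 A ω m) inferInstance) l Set.self_mem_Iic)

variable [MeasurableSpace Ω]

lemma procFiltration_le (hmeas : ∀ m, Measurable (A m)) (l : ℕ) :
    procFiltration k x0 A l ≤ ‹MeasurableSpace Ω› :=
  (procFiltration_le_iSup_comap l).trans (iSup₂_le fun i _ => (hmeas i).comap_le)

lemma integrable_comp_proc {μ : Measure Ω} [IsFiniteMeasure μ] (hmeas : ∀ m, Measurable (A m))
    {g : (Fin n → ℝ) → ℝ} (hg : Measurable g) (m : ℕ) :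
    Integrable (fun ω => g (proc k x0 A ω m)) μ :=
  .of_finite_range (hg.comp (measurable_proc fun i _ => hmeas i)).aestronglyMeasurable
    (((finite_range_proc m).image g).subset (Set.range_subset_iff.2 fun ω => ⟨_, ⟨ω, rfl⟩, rfl⟩))

lemma indep_comap_procFiltration {μ : Measure Ω} (hmeas : ∀ m, Measurable (A m))
    (hindep : iIndepFun A μ) (l : ℕ) :
    Indep (MeasurableSpace.comap (A l) inferInstance) (procFiltration k x0 A l) μ := by
  have h := indep_iSup_of_disjoint (fun i => (hmeas i).comap_le)
    ((iIndepFun_iff_iIndep _ _ _).mp hindep) (S := {l}) (T := Set.Iio l) (by simp)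
  rw [_root_.iSup_singleton] at h
  exact indep_of_indep_of_le_right h (procFiltration_le_iSup_comap l)

end Trajectory

section CondExp

variable {Ω β : Type*} {m mΩ : MeasurableSpace Ω} {μ : Measure Ω}

lemma condExp_eval_indep_eq_sum [IsFiniteMeasure μ] [Fintype β] [MeasurableSpace β]
    [MeasurableSingletonClass β] (hm : m ≤ mΩ) {Y : Ω → β} (hY : Measurable Y)
    (hindep : Indep (MeasurableSpace.comap Y inferInstance) m μ) {f : β → Ω → ℝ}
    (hf_meas : ∀ b, StronglyMeasurable[m] (f b)) (hf_int : ∀ b, Integrable (f b) μ) :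
    μ[fun ω => f (Y ω) ω | m] =ᵐ[μ] fun ω => ∑ b, μ.real (Y ⁻¹' {b}) * f b ω := by
  classical
  have hdecomp : (fun ω => f (Y ω) ω) = ∑ b, f b * (Y ⁻¹' {b}).indicator (1 : Ω → ℝ) := by
    ext ω
    simp [Set.indicator_apply]
  have hterm_int : ∀ b, Integrable (f b * (Y ⁻¹' {b}).indicator (1 : Ω → ℝ)) μ := by
    intro b
    have h : f b * (Y ⁻¹' {b}).indicator (1 : Ω → ℝ) = (Y ⁻¹' {b}).indicator (f b) := by
      ext ω
      simp [Set.indicator_apply]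
    exact h ▸ (hf_int b).indicator (hY (measurableSet_singleton b))
  have hcond : ∀ b, μ[f b * (Y ⁻¹' {b}).indicator (1 : Ω → ℝ) | m]
      =ᵐ[μ] fun ω => μ.real (Y ⁻¹' {b}) * f b ω := by
    intro b
    have hYb : MeasurableSet[MeasurableSpace.comap Y inferInstance] (Y ⁻¹' {b}) :=
      ⟨{b}, measurableSet_singleton b, rfl⟩
    have hind_int : Integrable ((Y ⁻¹' {b}).indicator (1 : Ω → ℝ)) μ :=
      (integrable_const 1).indicator (hY (measurableSet_singleton b))
    have hind_meas : StronglyMeasurable[MeasurableSpace.comap Y inferInstance]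
        ((Y ⁻¹' {b}).indicator (1 : Ω → ℝ)) := stronglyMeasurable_one.indicator hYb
    filter_upwards [condExp_mul_of_stronglyMeasurable_left (hf_meas b) (hterm_int b) hind_int,
      condExp_indep_eq hY.comap_le hm hind_meas hindep]
      with ω h₁ h₂
    rw [h₁, Pi.mul_apply, h₂, integral_indicator_one (hY (measurableSet_singleton b)),
        mul_comm]
  rw [hdecomp]
  filter_upwards [condExp_finsetSum (fun b _ => hterm_int b) m, ae_all_iff.2 hcond] with ω h₁ h₂
  rw [h₁, Finset.sum_apply]
  exact Finset.sum_congr rfl fun b _ => h₂ b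

end CondExp

section Uniform

variable {Ω α : Type*} [MeasurableSpace Ω] [Fintype α] {μ : Measure Ω} {Y : Ω → Finset α}
  {k : ℕ} {c : ENNReal}

lemma ae_card_eq_of_uniform (hY : ∀ s, μ (Y ⁻¹' {s}) = if #s = k then c else 0) :
    ∀ᵐ ω ∂μ, #(Y ω) = k := by
  rw [ae_iff]
  change μ (Y ⁻¹' {s | #s ≠ k}) = 0
  exact (measure_preimage_eq_zero_iff_of_countable (Set.to_countable _)).2
    fun s hs => by rw [hY, if_neg hs]

lemma sum_measureReal_mul_of_uniform (hY : ∀ s, μ (Y ⁻¹' {s}) = if #s = k then c else 0)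
    (g : Finset α → ℝ) :
    ∑ s, μ.real (Y ⁻¹' {s}) * g s = c.toReal * ∑ s ∈ powersetCard k univ, g s := by
  classical
  rw [powersetCard_eq_filter, powerset_univ, sum_filter, mul_sum]
  refine sum_congr rfl fun s _ => ?_
  rw [measureReal_def, hY]
  split_ifs <;> simp

end Uniform

/-- For the `k`-averaging process started from a mean-zero vector,
`E[S_n(l+1) | F_l] = (1 - (k-1)/(n-1)) S_n(l)` almost surely. -/
theorem averaging_condexp_sq_sum
    (n k : ℕ) (hk : 2 ≤ k) (hn : k < n)
    (Ω : Type*) [MeasurableSpace Ω]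
    (μ : Measure Ω) [IsProbabilityMeasure μ]
    (A : ℕ → Ω → Finset (Fin n))
    (hmeas : ∀ m, Measurable (A m))
    (hindep : iIndepFun A μ)
    (hunif : ∀ (m : ℕ) (s : Finset (Fin n)),
      μ (A m ⁻¹' {s}) = if s.card = k then ((n.choose k : ENNReal))⁻¹ else 0)
    (x0 : Fin n → ℝ) (hx0 : ∑ i, x0 i = 0) (l : ℕ) :
    μ[(fun ω => ∑ i, (proc k x0 A ω (l + 1) i) ^ 2) | procFiltration k x0 A l]
      =ᵐ[μ] fun ω => (1 - ((k : ℝ) - 1) / ((n : ℝ) - 1)) * ∑ i, (proc k x0 A ω l i) ^ 2 := by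
  have hS_meas : ∀ a : Finset (Fin n), Measurable fun y => ∑ i, avgStep k a y i ^ 2 :=
    fun a => by fun_prop
  have hcond := condExp_eval_indep_eq_sum (procFiltration_le hmeas l) (hmeas l)
    (indep_comap_procFiltration hmeas hindep l)
    (f := fun a ω => ∑ i, avgStep k a (proc k x0 A ω l) i ^ 2)
    (fun a => ((hS_meas a).comp (measurable_proc_procFiltration l)).stronglyMeasurable)
    (fun a => integrable_comp_proc hmeas (hS_meas a) l)
  have hcard : ∀ᵐ ω ∂μ, ∀ m, #(A m ω) = k := ae_all_iff.2 fun m => ae_card_eq_of_uniform (hunif m)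
  filter_upwards [hcond, hcard] with ω hω hcardω
  have hsum : ∑ i, proc k x0 A ω l i = 0 := by
    rw [sum_proc_eq_sum (by omega) fun i _ => hcardω i, hx0]
  refine hω.trans ?_
  rw [sum_measureReal_mul_of_uniform (hunif l), sum_powersetCard_sum_sq_avgStep hk hn.le hsum,
    ENNReal.toReal_inv, ENNReal.toReal_natCast, inv_mul_cancel_left₀
    (Nat.cast_ne_zero.mpr (Nat.choose_pos hn.le).ne')]
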